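/- With notation as in the slice functoriality setup: given morphisms f : K → K', f' : K' → K'', g : K → L, g' : K' → L, g'' : K'' → L with L decent, an antihomotopy h from g to g'f and an antihomotopy h' from g' to g''f', the composite antihomotopy h'f + h (defined by (h'f + h)_i = h'_i f_i + h_i) is an antihomotopy from g to g''f'f, and one has the equality of slice morphisms (f,h)* ∘ (f',h')* = (f'f, h'f + h)* : L//g'' → L//g. -/

import Mathlib

/-- An *augmented directed complex*: a chain complex of abelian groups in
non-negative degrees (`d n : X (n+1) →+ X n`), with an augmentation
`e : X 0 →+ ℤ` satisfying `e ∘ d₁ = 0`, and a positivity submonoid in each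
degree. -/
structure ADC where
  X : ℕ → Type
  [inst : ∀ n, AddCommGroup (X n)]
  d : ∀ n, X (n + 1) →+ X n
  e : X 0 →+ ℤ
  dd : ∀ n x, d n (d (n + 1) x) = 0
  ed : ∀ x, e (d 0 x) = 0
  pos : ∀ n, AddSubmonoid (X n)

attribute [instance] ADC.inst

/-- Morphisms of augmented directed complexes: chain maps compatible with the
augmentations and preserving the positivity submonoids. -/
structure ADCHom (K L : ADC) where
  f : ∀ n, K.X n →+ L.X n
  comm_d : ∀ n x, f n (K.d n x) = L.d n (f (n + 1) x)
  comm_e : ∀ x, L.e (f 0 x) = K.e x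
  map_pos : ∀ n x, x ∈ K.pos n → f n x ∈ L.pos n

def ADCHom.id (K : ADC) : ADCHom K K where
  f _ := AddMonoidHom.id _
  comm_d _ _ := rfl
  comm_e _ := rfl
  map_pos _ _ hx := hx

def ADCHom.comp {K L M : ADC} (ψ : ADCHom L M) (φ : ADCHom K L) : ADCHom K M where
  f n := (ψ.f n).comp (φ.f n)
  comm_d n x := by
    simp only [AddMonoidHom.comp_apply]
    rw [φ.comm_d, ψ.comm_d]
  comm_e x := by
    simp only [AddMonoidHom.comp_apply]
    rw [ψ.comm_e, φ.comm_e]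
  map_pos n x hx := ψ.map_pos n _ (φ.map_pos n x hx)

/-- The carrier of the suspension of `K` : `ℤ` in degree `0` and `K.X n` in
degree `n+1`.  Equivalently, this is the family `K_{n-1}` (with `K_{-1} = ℤ`)
indexed by `n`. -/
def ADC.S (K : ADC) : ℕ → Type
  | 0 => ℤ
  | n + 1 => K.X n

instance ADC.instSAdd (K : ADC) : ∀ n, AddCommGroup (K.S n)
  | 0 => inferInstanceAs (AddCommGroup ℤ)
  | n + 1 => inferInstanceAs (AddCommGroup (K.X n))

/-- The differential of the suspension : in lowest degree it is the
augmentation (`d₀ = e` convention), in higher degrees the differential of `K`. -/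
def ADC.Sd (K : ADC) : ∀ n, K.S (n + 1) →+ K.S n
  | 0 => K.e
  | n + 1 => K.d n

/-- The positivity submonoids of the suspension : `ℕ ⊆ ℤ` in degree `0`. -/
noncomputable def ADC.Spos (K : ADC) : ∀ n, AddSubmonoid (K.S n)
  | 0 => AddSubmonoid.nonneg ℤ
  | n + 1 => K.pos n

/-- The suspension of a morphism (the identity of `ℤ` in degree `0`). -/
def ADCHom.Sf {K L : ADC} (φ : ADCHom K L) : ∀ n, K.S n →+ L.S n
  | 0 => AddMonoidHom.id ℤ
  | n + 1 => φ.f n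
/-- The underlying family of maps of a degree-`i` element of the slice
`M // g` : families `u_j : K_j → M_{i+j+1}` for `j ≥ -1`, encoded with
`K.S j = K_{j-1}` (so `K.S 0 = ℤ = K_{-1}`). -/
abbrev SlF (K M : ADC) (i : ℕ) : Type := ∀ j : ℕ, K.S j →+ M.S (j + i + 1)

def scast (M : ADC) {m n : ℕ} (h : m = n) : M.S m →+ M.S n where
  toFun x := h ▸ x
  map_zero' := by subst h; rfl
  map_add' := by subst h; intro x y; rfl

/-- `j ↦ d_{i+j+1} ∘ u_j`. -/
def mainC (K M : ADC) (i : ℕ) (u : SlF K M i) (j : ℕ) : K.S j →+ M.S (j + i) :=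
  (M.Sd (j + i)).comp (u j)

/-- `j ↦ u_{j-1} ∘ d_j` (with `u_{-2} = 0`). -/
def prevC (K M : ADC) (i : ℕ) (u : SlF K M i) : ∀ j : ℕ, K.S j →+ M.S (j + i)
  | 0 => 0
  | s + 1 => (scast M (show s + i + 1 = s + 1 + i by omega)).comp ((u s).comp (K.Sd s))

/-- The differential of the slice `M // g` :
`d_i(u)_j = (-1)^{j+1} (d_{i+j+1} u_j - u_{j-1} d_j)`. -/
def Dsl (K M : ADC) (i : ℕ) (u : SlF K M (i + 1)) : SlF K M i := fun j =>
  ((-1 : ℤ) ^ j) • (mainC K M (i + 1) u j - prevC K M (i + 1) u j)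

/-- The degree-`0` condition of the slice `M // g` :
`(-1)^{j+1}(d_{j+1} u_j - u_{j-1} d_j) = e(u_{-1}(1)) · g_j`. -/
def Cond (K M : ADC) (g : ADCHom K M) (u : SlF K M 0) : Prop :=
  ∀ j, ((-1 : ℤ) ^ j) • (mainC K M 0 u j - prevC K M 0 u j) =
    M.e ((u 0) (1 : ℤ)) • g.Sf j

/-- Positivity for slice elements : `u_j(K*_j) ⊆ M*_{i+j+1}`. -/
def SlPos (K M : ADC) (i : ℕ) (u : SlF K M i) : Prop :=
  ∀ j x, x ∈ K.Spos j → u j x ∈ M.Spos (j + i + 1)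
/-- An *antihomotopy* from `a` to `b` (two morphisms `K → L` of augmented
directed complexes): a family `h_i : K_i →+ L_{i+1}` satisfying
`d_{i+1} h_i - h_{i-1} d_i = (-1)^i (b_i - a_i)` (with the conventions
`h_{-1} = 0` and `d_0 = e`, so that for `i = 0` one gets
`d_1 h_0 = b_0 - a_0`), and preserving positivity. -/
structure Antihtpy {K L : ADC} (a b : ADCHom K L) where
  h : ∀ i, K.X i →+ L.X (i + 1)
  cond0 : ∀ x, L.d 0 (h 0 x) = b.f 0 x - a.f 0 x
  cond : ∀ i x, L.d (i + 1) (h (i + 1) x) - h i (K.d i x) =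
    ((-1 : ℤ) ^ (i + 1)) • (b.f (i + 1) x - a.f (i + 1) x)
  map_pos : ∀ i x, x ∈ K.pos i → h i x ∈ L.pos (i + 1)

/-- An augmented directed complex is *decent* if the augmentation is
non-negative on the degree-`0` positivity submonoid. -/
def ADC.Decent (L : ADC) : Prop := ∀ x ∈ L.pos 0, 0 ≤ L.e x
/-- The extension of a family `h_i : K_i →+ L_{i+1}` to the suspended
indexing, with `h_{-1} = 0`. -/
def Ehx (K L : ADC) (hh : ∀ i, K.X i →+ L.X (i + 1)) : ∀ j, K.S j →+ L.S (j + 1)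
  | 0 => 0
  | j + 1 => hh j

/-- The map `(f,h)^*` on slice elements :
`(f,h)^*_i(u')_j = u'_j ∘ f_j + δ_{i,0} · e(u'_{-1}(1)) · h_j`. -/
def slApp {K K' L : ADC} (f : ADCHom K K') (hh : ∀ i, K.X i →+ L.X (i + 1)) :
    ∀ i, SlF K' L i → SlF K L i
  | 0, u' => fun j => (u' j).comp (f.Sf j) + L.e ((u' 0) (1 : ℤ)) • Ehx K L hh j
  | i + 1, u' => fun j => (u' j).comp (f.Sf j)

/-!
The defining relation of an antihomotopy is linear in the pair `(h, b - a)`, so antihomotopies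
from `a` to `b` and from `b` to `c` add up to one from `a` to `c`; precomposing with a chain map
preserves antihomotopies. For the slices, `(f,h)^*` does not change the component `u_{-1}`, so
both sides of the functoriality equation carry the same scalar `e(u_{-1}(1))`, and the equation
reduces to associativity of composition and linearity of `h ↦ h ∘ f`.
-/

namespace Antihtpy

variable {K K' L : ADC}

def trans {a b c : ADCHom K L} (h₁ : Antihtpy a b) (h₂ : Antihtpy b c) : Antihtpy a c where
  h i := h₁.h i + h₂.h i
  cond0 x := by
    simp only [AddMonoidHom.add_apply, map_add, h₁.cond0, h₂.cond0]
    abel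
  cond i x := by
    have hsplit : ∀ p q r s : L.X (i + 1), p + q - (r + s) = (p - r) + (q - s) :=
      fun _ _ _ _ => by abel
    simp only [AddMonoidHom.add_apply, map_add]
    rw [hsplit, h₁.cond, h₂.cond, ← smul_add, sub_add_sub_cancel']
  map_pos i x hx := (L.pos (i + 1)).add_mem (h₁.map_pos i x hx) (h₂.map_pos i x hx)

def precomp {a b : ADCHom K' L} (h : Antihtpy a b) (f : ADCHom K K') :
    Antihtpy (a.comp f) (b.comp f) where
  h i := (h.h i).comp (f.f i)
  cond0 x := h.cond0 (f.f 0 x)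
  cond i x := by
    simp only [AddMonoidHom.comp_apply, f.comm_d]
    exact h.cond i (f.f (i + 1) x)
  map_pos i x hx := h.map_pos i _ (f.map_pos i x hx)

end Antihtpy

theorem ADCHom.Sf_comp {K K' K'' : ADC} (f' : ADCHom K' K'') (f : ADCHom K K') :
    ∀ j, (f'.comp f).Sf j = (f'.Sf j).comp (f.Sf j)
  | 0 => rfl
  | _ + 1 => rfl

section Ehx

variable {K K' L : ADC}

theorem Ehx_add (hh₁ hh₂ : ∀ i, K.X i →+ L.X (i + 1)) :
    ∀ j, Ehx K L (fun i => hh₁ i + hh₂ i) j = Ehx K L hh₁ j + Ehx K L hh₂ j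
  | 0 => (add_zero 0).symm
  | _ + 1 => rfl

theorem Ehx_comp (hh : ∀ i, K'.X i →+ L.X (i + 1)) (f : ADCHom K K') :
    ∀ j, Ehx K L (fun i => (hh i).comp (f.f i)) j = (Ehx K' L hh j).comp (f.Sf j)
  | 0 => rfl
  | _ + 1 => rfl

end Ehx

section slApp

variable {K K' K'' L : ADC}

theorem slApp_zero (f : ADCHom K K') (hh : ∀ i, K.X i →+ L.X (i + 1)) (u : SlF K' L 0)
    (j : ℕ) :
    slApp f hh 0 u j = (u j).comp (f.Sf j) + L.e ((u 0) (1 : ℤ)) • Ehx K L hh j :=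
  rfl

theorem slApp_succ (f : ADCHom K K') (hh : ∀ i, K.X i →+ L.X (i + 1)) (i : ℕ)
    (u : SlF K' L (i + 1)) (j : ℕ) :
    slApp f hh (i + 1) u j = (u j).comp (f.Sf j) :=
  rfl

theorem slApp_apply_zero (f : ADCHom K K') (hh : ∀ i, K.X i →+ L.X (i + 1)) :
    ∀ i (u : SlF K' L i), slApp f hh i u 0 = u 0
  | 0, u => by
    rw [slApp_zero]
    exact add_eq_left.mpr (smul_zero _)
  | _ + 1, _ => rfl

theorem slApp_comp (f : ADCHom K K') (f' : ADCHom K' K'')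
    (hh : ∀ i, K.X i →+ L.X (i + 1)) (hh' : ∀ i, K'.X i →+ L.X (i + 1)) :
    ∀ i (u : SlF K'' L i), slApp f hh i (slApp f' hh' i u) =
      slApp (f'.comp f) (fun i => (hh' i).comp (f.f i) + hh i) i u
  | 0, u => by
    funext j
    rw [slApp_zero, slApp_apply_zero, slApp_zero, slApp_zero, Ehx_add, Ehx_comp,
      ADCHom.Sf_comp, AddMonoidHom.add_comp, AddMonoidHom.smul_comp, AddMonoidHom.comp_assoc,
      smul_add]
    exact add_assoc _ _ _
  | _ + 1, u => by
    funext j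
    rw [slApp_succ, slApp_succ, slApp_succ, ADCHom.Sf_comp, AddMonoidHom.comp_assoc]

end slApp

theorem statement17_general (K K' K'' L : ADC) (f : ADCHom K K') (f' : ADCHom K' K'')
    (g : ADCHom K L) (g' : ADCHom K' L) (g'' : ADCHom K'' L)
    (h : Antihtpy g (g'.comp f)) (h' : Antihtpy g' (g''.comp f')) :
    (∃ H : Antihtpy g (g''.comp (f'.comp f)),
      H.h = fun i => (h'.h i).comp (f.f i) + h.h i) ∧
    (∀ (i : ℕ) (u : SlF K'' L i),
      slApp f h.h i (slApp f' h'.h i u) =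
        slApp (f'.comp f) (fun i => (h'.h i).comp (f.f i) + h.h i) i u) :=
  ⟨⟨h.trans (h'.precomp f), funext fun _ => add_comm _ _⟩, slApp_comp f f' h.h h'.h⟩

/-- Given `f : K → K'`, `f' : K' → K''`, `g : K → L`,
`g' : K' → L`, `g'' : K'' → L` with `L` decent, an antihomotopy `h` from `g`
to `g' f` and an antihomotopy `h'` from `g'` to `g'' f'`, the composite
`h' f + h` (given by `(h' f + h)_i = h'_i ∘ f_i + h_i`) is an antihomotopy
from `g` to `g'' f' f`, and the slice morphisms satisfy
`(f,h)^* ∘ (f',h')^* = (f' f, h' f + h)^* : L//g'' → L//g`. -/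
theorem statement17 (K K' K'' L : ADC) (f : ADCHom K K') (f' : ADCHom K' K'')
    (g : ADCHom K L) (g' : ADCHom K' L) (g'' : ADCHom K'' L) (hdec : L.Decent)
    (h : Antihtpy g (g'.comp f)) (h' : Antihtpy g' (g''.comp f')) :
    (∃ H : Antihtpy g (g''.comp (f'.comp f)),
      H.h = fun i => (h'.h i).comp (f.f i) + h.h i) ∧
    (∀ (i : ℕ) (u : SlF K'' L i),
      slApp f h.h i (slApp f' h'.h i u) =
        slApp (f'.comp f) (fun i => (h'.h i).comp (f.f i) + h.h i) i u) :=
  statement17_general K K' K'' L f f' g g' g'' h h'
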